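/- Let G be a weighted graph with h ≥ 2 connected components and let W be a real number with W > w(E(G)). Let G' be the weighted graph obtained from G by adding one new vertex u and, for each connected component of G, one new edge of weight W joining u to an arbitrarily chosen vertex of that component. Then: (i) G' is connected; (ii) every k-way split of G is also a k-way split of G' of the same weight; and (iii) for every integer k with 2 ≤ k ≤ |V(G)| − h + 1, every minimum k-way split of G' contains none of the newly added edges and is a minimum k-way split of G. -/

import Mathlib

open Finset

namespace KCut

open scoped Classical

/-- Number of connected components of a graph. -/
noncomputable def numComp {V : Type*} (G : SimpleGraph V) : ℕ :=
  Nat.card G.ConnectedComponent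

/-- `S` is an `h`-way split of `G`: a set of edges of `G` whose removal increases the
number of connected components by `h - 1`. -/
def IsSplit {V : Type*} (G : SimpleGraph V) (S : Finset (Sym2 V)) (h : ℕ) : Prop :=
  ↑S ⊆ G.edgeSet ∧ numComp (G.deleteEdges ↑S) = (h - 1) + numComp G

/-- Total weight of a finite set of edges. -/
noncomputable def weight {V : Type*} (w : Sym2 V → ℝ) (S : Finset (Sym2 V)) : ℝ :=
  ∑ e ∈ S, w e

/-- Density of an `h`-way split: its weight divided by `h - 1`. -/
noncomputable def density {V : Type*} (w : Sym2 V → ℝ) (S : Finset (Sym2 V)) (h : ℕ) : ℝ :=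
  weight w S / ((h : ℝ) - 1)

/-- `β(G) = |E|/|V|`. -/
noncomputable def beta {V : Type*} [Fintype V] (G : SimpleGraph V) [Fintype G.edgeSet] : ℝ :=
  (G.edgeFinset.card : ℝ) / (Fintype.card V : ℝ)

/-- A matching: a set of pairwise vertex-disjoint edges of `G`. -/
def IsMatchingSet {V : Type*} (G : SimpleGraph V) (M : Finset (Sym2 V)) : Prop :=
  ↑M ⊆ G.edgeSet ∧ ∀ e ∈ M, ∀ f ∈ M, e ≠ f → ∀ v : V, v ∈ e → v ∉ f

/-- A minimum `h`-way split: an `h`-way split of minimum total weight. -/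
def IsMinSplit {V : Type*} (G : SimpleGraph V) (w : Sym2 V → ℝ)
    (S : Finset (Sym2 V)) (h : ℕ) : Prop :=
  IsSplit G S h ∧ ∀ T : Finset (Sym2 V), IsSplit G T h → weight w S ≤ weight w T

/-- An `h`-way split `S` is sparse if no split of separation degree at most `h`
has smaller density. -/
def IsSparse {V : Type*} (G : SimpleGraph V) (w : Sym2 V → ℝ)
    (S : Finset (Sym2 V)) (h : ℕ) : Prop :=
  ∀ h' : ℕ, h' ≤ h → 2 ≤ h' → ∀ S' : Finset (Sym2 V), IsSplit G S' h' →
    density w S h ≤ density w S' h'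

/-!
Delete a set `S` of old edges from both graphs. In `G' - S` the new vertex absorbs exactly the
components of `G - S` that contain one of the chosen vertices `r c`; these are `comp(G)` many,
since `G - S ≤ G` and the `r c` lie in distinct components of `G`. All other components of
`G - S` survive, so `comp(G' - S) + comp(G) = comp(G - S) + 1`, and with `S = ∅` this gives
`comp(G') = 1`. Hence the `k`-way splits of `G` are exactly the `k`-way splits of `G'` made of
old edges. For `k ≤ |V| - comp(G) + 1` some `k`-way split of `G` exists, and it weighs at most
`w(E) < W`; a minimum `k`-way split of `G'` is no heavier, so it contains no new edge.
-/

open SimpleGraph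

section Components

variable {V : Type*}

lemma numComp_le_card [Finite V] (G : SimpleGraph V) : numComp G ≤ Nat.card V :=
  Nat.card_le_card_of_surjective _ Quot.mk_surjective

lemma numComp_bot : numComp (⊥ : SimpleGraph V) = Nat.card V :=
  (Nat.card_eq_of_bijective _
    ⟨fun _ _ h => reachable_bot.mp (ConnectedComponent.exact h), Quot.mk_surjective⟩).symm

lemma connected_of_numComp_eq_one [Nonempty V] {G : SimpleGraph V} (h : numComp G = 1) :
    G.Connected := by
  have : Subsingleton G.ConnectedComponent := (Nat.card_eq_one_iff_unique.mp h).1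
  exact ⟨fun _ _ => ConnectedComponent.exact (Subsingleton.elim _ _)⟩

lemma reachable_deleteEdges_singleton_of_reachable {K : SimpleGraph V} {u v : V} (a b : V)
    (h : K.Reachable u v) :
    (K.deleteEdges {s(a, b)}).Reachable u v ∨ (K.deleteEdges {s(a, b)}).Reachable u a ∨
      (K.deleteEdges {s(a, b)}).Reachable u b := by
  obtain ⟨p⟩ := h
  induction p with
  | nil => exact .inl .rfl
  | @cons u x v hux _ ih =>
    by_cases he : s(u, x) = s(a, b)
    · rcases Sym2.eq_iff.mp he with ⟨rfl, -⟩ | ⟨rfl, -⟩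
      · exact .inr (.inl .rfl)
      · exact .inr (.inr .rfl)
    · have hadj : (K.deleteEdges {s(a, b)}).Adj u x := by simpa [deleteEdges_adj, hux] using he
      exact ih.imp hadj.reachable.trans (Or.imp hadj.reachable.trans hadj.reachable.trans)

lemma numComp_deleteEdges_singleton_le [Finite V] (K : SimpleGraph V) (e : Sym2 V) :
    numComp (K.deleteEdges {e}) ≤ numComp K + 1 := by
  induction e using Sym2.ind with
  | _ a b =>
  set K' := K.deleteEdges {s(a, b)}
  -- only the component of `b` is sent to `none`; the others are told apart by their image in `K`
  let ι : K'.ConnectedComponent → Option K.ConnectedComponent := fun c =>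
    if c = K'.connectedComponentMk b then none else some (c.map (Hom.ofLE (deleteEdges_le _)))
  suffices ι.Injective by
    simpa [numComp, Finite.card_option] using Nat.card_le_card_of_injective ι this
  refine ConnectedComponent.ind₂ fun u v huv => ?_
  by_cases hu : K'.connectedComponentMk u = K'.connectedComponentMk b <;>
    by_cases hv : K'.connectedComponentMk v = K'.connectedComponentMk b
  · rw [hu, hv]
  · simp [ι, hu, hv] at huv
  · simp [ι, hu, hv] at huv
  · simp only [ι, hu, hv, if_false, Option.some_inj] at huv
    have hreach : K.Reachable u v := ConnectedComponent.exact huv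
    have hu' := reachable_deleteEdges_singleton_of_reachable a b hreach
    have hv' := reachable_deleteEdges_singleton_of_reachable a b hreach.symm
    simp only [← ConnectedComponent.eq] at hu' hv' ⊢
    grind

lemma numComp_deleteEdges_insert_le [Finite V] (G : SimpleGraph V) (e : Sym2 V)
    (s : Set (Sym2 V)) :
    numComp (G.deleteEdges (insert e s)) ≤ numComp (G.deleteEdges s) + 1 := by
  rw [Set.insert_eq, Set.union_comm, ← deleteEdges_deleteEdges]
  exact numComp_deleteEdges_singleton_le _ _

/-- A discrete intermediate value theorem: deleting one more edge adds at most one component. -/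
lemma exists_subset_numComp_deleteEdges_eq [Finite V] (G : SimpleGraph V)
    (s : Finset (Sym2 V)) {n : ℕ} (hG : numComp G ≤ n) (hs : n ≤ numComp (G.deleteEdges s)) :
    ∃ t ⊆ s, numComp (G.deleteEdges t) = n := by
  induction s using Finset.induction_on with
  | empty => exact ⟨∅, subset_rfl, by simp_all only [coe_empty, deleteEdges_empty]; omega⟩
  | insert e s _ ih =>
    by_cases hn : n ≤ numComp (G.deleteEdges s)
    · obtain ⟨t, hts, ht⟩ := ih hn
      exact ⟨t, hts.trans (subset_insert _ _), ht⟩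
    · have := numComp_deleteEdges_insert_le G e s
      rw [coe_insert] at hs
      exact ⟨insert e s, subset_rfl, by rw [coe_insert]; omega⟩

lemma exists_isSplit [Fintype V] (G : SimpleGraph V) {k : ℕ}
    (hk : k ≤ Fintype.card V - numComp G + 1) : ∃ S, IsSplit G S k := by
  have hmax : numComp (G.deleteEdges G.edgeFinset) = Fintype.card V := by
    rw [coe_edgeFinset, deleteEdges_edgeSet, sdiff_self, numComp_bot, Nat.card_eq_fintype_card]
  have hG : numComp G ≤ Fintype.card V := Nat.card_eq_fintype_card (α := V) ▸ numComp_le_card G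
  obtain ⟨S, hS, hcard⟩ := exists_subset_numComp_deleteEdges_eq G G.edgeFinset
    (n := k - 1 + numComp G) (by omega) (by omega)
  exact ⟨S, fun e he => mem_edgeFinset.mp (hS he), hcard⟩

lemma card_image_range_of_le {H G : SimpleGraph V} (hHG : H ≤ G)
    {r : G.ConnectedComponent → V} (hr : ∀ c, G.connectedComponentMk (r c) = c) :
    Nat.card (H.connectedComponentMk '' Set.range r) = numComp G := by
  rw [← Set.range_comp, Nat.card_range_of_injective]
  · rfl
  intro c d hcd
  rw [← hr c, ← hr d]
  exact ConnectedComponent.sound ((ConnectedComponent.exact hcd).mono hHG)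

end Components

section Weights

variable {V : Type*}

lemma none_notMem_map_some (e : Sym2 V) : (none : Option V) ∉ e.map some := by
  simp [Sym2.mem_map]

lemma exists_map_some_eq_of_none_notMem {e : Sym2 (Option V)} (he : none ∉ e) :
    ∃ f : Sym2 V, f.map some = e := by
  induction e using Sym2.ind with
  | _ x y =>
  obtain ⟨a, rfl⟩ := Option.ne_none_iff_exists'.mp fun h => he (h ▸ Sym2.mem_mk_left x y)
  obtain ⟨b, rfl⟩ := Option.ne_none_iff_exists'.mp fun h => he (h ▸ Sym2.mem_mk_right _ y)
  exact ⟨s(a, b), rfl⟩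

lemma exists_eq_image_map_some [DecidableEq V] {S : Finset (Sym2 (Option V))}
    (hS : ∀ e ∈ S, none ∉ e) : ∃ T : Finset (Sym2 V), S = T.image (Sym2.map some) := by
  refine ⟨S.preimage _ (Sym2.map.injective (Option.some_injective V)).injOn, ?_⟩
  rw [image_preimage]
  exact (filter_true_of_mem fun e he => exists_map_some_eq_of_none_notMem (hS e he)).symm

lemma weight_image_map_some [DecidableEq V] {w : Sym2 V → ℝ} {w' : Sym2 (Option V) → ℝ}
    {S : Finset (Sym2 V)} (hS : ∀ e ∈ S, w' (e.map some) = w e) :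
    weight w' (S.image (Sym2.map some)) = weight w S := by
  rw [weight, weight, sum_image fun _ _ _ _ h => Sym2.map.injective (Option.some_injective V) h]
  exact sum_congr rfl hS

lemma weight_le_weight_edgeFinset {G : SimpleGraph V} [Fintype G.edgeSet] {w : Sym2 V → ℝ}
    (hw : ∀ e ∈ G.edgeSet, 0 ≤ w e) {S : Finset (Sym2 V)} (hS : ↑S ⊆ G.edgeSet) :
    weight w S ≤ weight w G.edgeFinset :=
  sum_le_sum_of_subset_of_nonneg (fun _ he => mem_edgeFinset.mpr (hS he))
    fun e he _ => hw e (mem_edgeFinset.mp he)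

end Weights

structure IsApexExtension {V : Type*} (G : SimpleGraph V) (R : Set V)
    (G' : SimpleGraph (Option V)) : Prop where
  some_adj_some : ∀ a b, G'.Adj (some a) (some b) ↔ G.Adj a b
  none_adj_some : ∀ a, G'.Adj none (some a) ↔ a ∈ R

namespace IsApexExtension

variable {V : Type*} {G : SimpleGraph V} {R : Set V} {G' : SimpleGraph (Option V)}

lemma map_some_mem_edgeSet (h : IsApexExtension G R G') (e : Sym2 V) :
    e.map some ∈ G'.edgeSet ↔ e ∈ G.edgeSet := by
  induction e using Sym2.ind with
  | _ a b => exact h.some_adj_some a b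

lemma exists_eq_of_none_mem (h : IsApexExtension G R G') {e : Sym2 (Option V)}
    (he : e ∈ G'.edgeSet) (hn : none ∈ e) : ∃ a ∈ R, e = s(none, some a) := by
  obtain ⟨x, rfl⟩ := Sym2.mem_iff_exists.mp hn
  cases x with
  | none => exact (G'.loopless.irrefl _ he).elim
  | some a => exact ⟨a, (h.none_adj_some a).mp he, rfl⟩

protected lemma deleteEdges [DecidableEq V] (h : IsApexExtension G R G')
    (S : Finset (Sym2 V)) :
    IsApexExtension (G.deleteEdges S) R (G'.deleteEdges (S.image (Sym2.map some))) where
  some_adj_some a b := by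
    have hmem := (Sym2.map.injective (Option.some_injective V)).mem_finset_image (s := S)
      (a := s(a, b))
    simp only [deleteEdges_adj, h.some_adj_some, mem_coe]
    rw [← Sym2.map_mk, hmem]
  none_adj_some a := by
    simp only [deleteEdges_adj, h.none_adj_some, mem_coe, mem_image, and_iff_left_iff_imp]
    rintro - ⟨f, -, hf⟩
    exact none_notMem_map_some f (hf ▸ Sym2.mem_mk_left _ _)

def hom (h : IsApexExtension G R G') : G →g G' :=
  ⟨some, (h.some_adj_some _ _).mpr⟩

lemma reachable_none (h : IsApexExtension G R G') {a : V}
    (ha : G.connectedComponentMk a ∈ G.connectedComponentMk '' R) :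
    G'.Reachable (some a) none := by
  obtain ⟨b, hb, hba⟩ := ha
  exact ((ConnectedComponent.exact hba).map h.hom).symm.trans
    ((h.none_adj_some b).mpr hb).reachable.symm

/-- The component of `none` absorbs the components of `G` that meet `R`; every other
component of `G` stays a component of `G'`. -/
noncomputable def connectedComponentEquiv (h : IsApexExtension G R G') :
    G'.ConnectedComponent ≃ Option ↥(G.connectedComponentMk '' R)ᶜ := by
  set T := G.connectedComponentMk '' R
  let ρ : Option V → Option ↥Tᶜ
    | none => none
    | some a => if ha : G.connectedComponentMk a ∈ T then none
        else some ⟨G.connectedComponentMk a, ha⟩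
  have hρ : ∀ {x y}, G'.Adj x y → ρ x = ρ y := by
    have hnone : ∀ {a}, G'.Adj none (some a) → ρ (some a) = none := fun hadj =>
      dif_pos ⟨_, (h.none_adj_some _).mp hadj, rfl⟩
    rintro (_ | a) (_ | b) hadj
    · rfl
    · exact (hnone hadj).symm
    · exact hnone hadj.symm
    · simp only [ρ, ConnectedComponent.connectedComponentMk_eq_of_adj
        ((h.some_adj_some a b).mp hadj)]
  have hρwalk : ∀ {x y} (p : G'.Walk x y), ρ x = ρ y := fun p => by
    induction p with
    | nil => rfl
    | cons hadj _ ih => exact (hρ hadj).trans ih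
  refine
    { toFun := ConnectedComponent.lift ρ fun _ _ p _ => hρwalk p
      invFun := fun
        | none => G'.connectedComponentMk none
        | some c => c.val.map h.hom
      left_inv := ConnectedComponent.ind ?left
      right_inv := ?right }
  case left =>
    rintro (_ | a)
    · rfl
    by_cases ha : G.connectedComponentMk a ∈ T
    · simpa [ρ, ha] using ConnectedComponent.sound (h.reachable_none ha).symm
    · simp [ρ, ha, hom]
  case right =>
    rintro (_ | ⟨c, hc⟩)
    · rfl
    induction c using ConnectedComponent.ind
    simpa [ρ, hom] using hc

lemma numComp_add_card [Finite V] (h : IsApexExtension G R G') :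
    numComp G' + Nat.card (G.connectedComponentMk '' R) = numComp G + 1 := by
  rw [numComp, Nat.card_congr h.connectedComponentEquiv, Finite.card_option, numComp,
    ← Nat.card_congr (Equiv.Set.sumCompl (G.connectedComponentMk '' R)), Nat.card_sum]
  omega

section Representatives

variable {r : G.ConnectedComponent → V}

lemma numComp_deleteEdges_image_add [Finite V] [DecidableEq V]
    (h : IsApexExtension G (Set.range r) G') (hr : ∀ c, G.connectedComponentMk (r c) = c)
    (S : Finset (Sym2 V)) :
    numComp (G'.deleteEdges (S.image (Sym2.map some))) + numComp G =
      numComp (G.deleteEdges S) + 1 := by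
  simpa only [card_image_range_of_le (deleteEdges_le _) hr] using
    (h.deleteEdges S).numComp_add_card

lemma numComp_eq_one [Finite V] (h : IsApexExtension G (Set.range r) G')
    (hr : ∀ c, G.connectedComponentMk (r c) = c) : numComp G' = 1 := by
  classical
  have := h.numComp_deleteEdges_image_add hr ∅
  simp only [image_empty, coe_empty, deleteEdges_empty] at this
  omega

lemma isSplit_image_iff [Finite V] [DecidableEq V] (h : IsApexExtension G (Set.range r) G')
    (hr : ∀ c, G.connectedComponentMk (r c) = c) {S : Finset (Sym2 V)} {k : ℕ} :
    IsSplit G' (S.image (Sym2.map some)) k ↔ IsSplit G S k := by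
  have hcount := h.numComp_deleteEdges_image_add hr S
  have hsub : ↑(S.image (Sym2.map some)) ⊆ G'.edgeSet ↔ ↑S ⊆ G.edgeSet := by
    rw [coe_image, Set.image_subset_iff, show Sym2.map some ⁻¹' G'.edgeSet = G.edgeSet from
      Set.ext h.map_some_mem_edgeSet]
  rw [IsSplit, IsSplit, hsub, h.numComp_eq_one hr]
  constructor <;> rintro ⟨hS, hk⟩ <;> exact ⟨hS, by omega⟩

lemma isMinSplit_of_isMinSplit_image [Finite V] [DecidableEq V]
    (h : IsApexExtension G (Set.range r) G') (hr : ∀ c, G.connectedComponentMk (r c) = c)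
    {w : Sym2 V → ℝ} {w' : Sym2 (Option V) → ℝ}
    (hw' : ∀ e ∈ G.edgeSet, w' (e.map some) = w e) {T : Finset (Sym2 V)} {k : ℕ} (hT : IsMinSplit G' w' (T.image (Sym2.map some)) k) :
    IsMinSplit G w T k := by
  have hwt {S : Finset (Sym2 V)} (hS : IsSplit G S k) :
      weight w' (S.image (Sym2.map some)) = weight w S :=
    weight_image_map_some fun e he => hw' e (hS.1 he)
  have hTsplit := (h.isSplit_image_iff hr).mp hT.1
  refine ⟨hTsplit, fun T' hT' => ?_⟩
  calc weight w T = weight w' (T.image (Sym2.map some)) := (hwt hTsplit).symm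
    _ ≤ weight w' (T'.image (Sym2.map some)) := hT.2 _ ((h.isSplit_image_iff hr).mpr hT')
    _ = weight w T' := hwt hT'

lemma none_notMem_of_weight_lt (h : IsApexExtension G (Set.range r) G') {w : Sym2 V → ℝ}
    (hw : ∀ e ∈ G.edgeSet, 0 ≤ w e) {w' : Sym2 (Option V) → ℝ} {W : ℝ} (hW : 0 ≤ W)
    (hw'old : ∀ e ∈ G.edgeSet, w' (e.map some) = w e)
    (hw'new : ∀ c, w' s(none, some (r c)) = W) {S' : Finset (Sym2 (Option V))}
    (hS' : ↑S' ⊆ G'.edgeSet) (hlt : weight w' S' < W) : ∀ e ∈ S', none ∉ e := by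
  have hw'W : ∀ e ∈ G'.edgeSet, none ∈ e → w' e = W := by
    intro e he hn
    obtain ⟨_, ⟨c, rfl⟩, rfl⟩ := h.exists_eq_of_none_mem he hn
    exact hw'new c
  have hw' : ∀ e ∈ G'.edgeSet, 0 ≤ w' e := by
    intro e he
    by_cases hn : none ∈ e
    · exact (hw'W e he hn).symm ▸ hW
    · obtain ⟨f, rfl⟩ := exists_map_some_eq_of_none_notMem hn
      have hf := (h.map_some_mem_edgeSet f).mp he
      exact (hw'old f hf).symm ▸ hw f hf
  intro e he hn
  have hle := single_le_sum (fun f hf => hw' f (hS' hf)) he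
  rw [hw'W e (hS' he) hn] at hle
  exact hlt.not_ge hle

end Representatives

end IsApexExtension

theorem connectify_preserves_splits_general
    {V : Type*} [Fintype V] [DecidableEq V]
    (G : SimpleGraph V) [DecidableRel G.Adj]
    (w : Sym2 V → ℝ) (hw : ∀ e ∈ G.edgeSet, 0 < w e)
    (W : ℝ) (hW : weight w G.edgeFinset < W)
    (r : G.ConnectedComponent → V) (hr : ∀ c, G.connectedComponentMk (r c) = c)
    (G' : SimpleGraph (Option V))
    (hadj : ∀ a b : V, G'.Adj (some a) (some b) ↔ G.Adj a b)
    (hadju : ∀ a : V, G'.Adj none (some a) ↔ ∃ c, r c = a)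
    (w' : Sym2 (Option V) → ℝ)
    (hw'old : ∀ e : Sym2 V, e ∈ G.edgeSet → w' (e.map some) = w e)
    (hw'new : ∀ c : G.ConnectedComponent, w' s(none, some (r c)) = W) :
    G'.Connected ∧
    (∀ (k : ℕ) (S : Finset (Sym2 V)), IsSplit G S k →
      IsSplit G' (S.image (Sym2.map some)) k ∧
        weight w' (S.image (Sym2.map some)) = weight w S) ∧
    (∀ k : ℕ, 2 ≤ k → k ≤ Fintype.card V - numComp G + 1 →
      ∀ S' : Finset (Sym2 (Option V)), IsMinSplit G' w' S' k →
        (∀ e ∈ S', (none : Option V) ∉ e) ∧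
        ∃ T : Finset (Sym2 V), S' = T.image (Sym2.map some) ∧ IsMinSplit G w T k) := by
  have hext : IsApexExtension G (Set.range r) G' := ⟨hadj, hadju⟩
  have hw₀ : ∀ e ∈ G.edgeSet, 0 ≤ w e := fun e he => (hw e he).le
  have hwt {k : ℕ} {S : Finset (Sym2 V)} (hS : IsSplit G S k) :
      weight w' (S.image (Sym2.map some)) = weight w S :=
    weight_image_map_some fun e he => hw'old e (hS.1 he)
  refine ⟨connected_of_numComp_eq_one (hext.numComp_eq_one hr),
    fun k S hS => ⟨(hext.isSplit_image_iff hr).mpr hS, hwt hS⟩, ?_⟩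
  intro k _ hk S' hS'
  obtain ⟨S₀, hS₀⟩ := exists_isSplit G hk
  have hS₀W : weight w S₀ < W := (weight_le_weight_edgeFinset hw₀ hS₀.1).trans_lt hW
  have hS'W : weight w' S' < W :=
    calc weight w' S' ≤ weight w' (S₀.image (Sym2.map some)) :=
          hS'.2 _ ((hext.isSplit_image_iff hr).mpr hS₀)
      _ = weight w S₀ := hwt hS₀
      _ < W := hS₀W
  have hW₀ : 0 ≤ W := (sum_nonneg fun e he => hw₀ e (hS₀.1 he)).trans hS₀W.le
  have hnone := hext.none_notMem_of_weight_lt hw₀ hW₀ hw'old hw'new hS'.1.1 hS'W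
  obtain ⟨T, rfl⟩ := exists_eq_image_map_some hnone
  exact ⟨hnone, T, rfl, hext.isMinSplit_of_isMinSplit_image hr hw'old hS'⟩

theorem connectify_preserves_splits
    {V : Type*} [Fintype V] [DecidableEq V]
    (G : SimpleGraph V) [DecidableRel G.Adj]
    (w : Sym2 V → ℝ) (hw : ∀ e ∈ G.edgeSet, 0 < w e)
    (hcomp : 2 ≤ numComp G)
    (W : ℝ) (hW : weight w G.edgeFinset < W)
    (r : G.ConnectedComponent → V) (hr : ∀ c, G.connectedComponentMk (r c) = c)
    (G' : SimpleGraph (Option V))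
    (hadj : ∀ a b : V, G'.Adj (some a) (some b) ↔ G.Adj a b)
    (hadju : ∀ a : V, G'.Adj none (some a) ↔ ∃ c, r c = a)
    (w' : Sym2 (Option V) → ℝ)
    (hw'old : ∀ e : Sym2 V, e ∈ G.edgeSet → w' (e.map some) = w e)
    (hw'new : ∀ c : G.ConnectedComponent, w' s(none, some (r c)) = W) :
    G'.Connected ∧
    (∀ (k : ℕ) (S : Finset (Sym2 V)), IsSplit G S k →
      IsSplit G' (S.image (Sym2.map some)) k ∧
        weight w' (S.image (Sym2.map some)) = weight w S) ∧
    (∀ k : ℕ, 2 ≤ k → k ≤ Fintype.card V - numComp G + 1 →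
      ∀ S' : Finset (Sym2 (Option V)), IsMinSplit G' w' S' k →
        (∀ e ∈ S', (none : Option V) ∉ e) ∧
        ∃ T : Finset (Sym2 V), S' = T.image (Sym2.map some) ∧ IsMinSplit G w T k) :=
  connectify_preserves_splits_general G w hw W hW r hr G' hadj hadju w' hw'old hw'new

end KCut
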